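/- arXiv:1004.3802 — 7 statements merged into one kernel-verified Lean document; each statement's English description precedes it below -/
import Mathlib

section
/- Let (X, ≺) be a well-founded extensional graph and let x, y be nodes of X. If the pointed graphs X/x and X/y are isomorphic (as pointed graphs), then x = y. -/
universe u v

/-- A relation is (inductively) well-founded if every inductive subset is the whole type:
`S` is inductive when `x ∈ S` whenever every child of `x` is in `S`. -/
def IsWFRel {X : Type u} (r : X → X → Prop) : Prop :=
  ∀ S : Set X, (∀ x, (∀ y, r y x → y ∈ S) → x ∈ S) → S = Set.univ

/-- A relation is extensional if nodes with the same children are equal. -/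
def IsExtRel {X : Type u} (r : X → X → Prop) : Prop :=
  ∀ x y, (∀ z, r z x ↔ r z y) → x = y

/-- `Below r x` is the full subgraph `X/x` of nodes admitting a (possibly empty) path to `x`. -/
def Below {X : Type u} (r : X → X → Prop) (x : X) : Type u :=
  {z : X // Relation.ReflTransGen r z x}

/-- The induced relation on the subgraph `X/x`. -/
def belowRel {X : Type u} (r : X → X → Prop) (x : X) :
    Below r x → Below r x → Prop :=
  fun a b => r a.1 b.1

/-- The root of the pointed subgraph `X/x`. -/
def belowRoot {X : Type u} (r : X → X → Prop) (x : X) : Below r x :=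
  ⟨x, Relation.ReflTransGen.refl⟩

/-- Isomorphism of pointed graphs: a relation-preserving-and-reflecting bijection
taking the first distinguished point to the second. -/
def PIso {X : Type u} {Y : Type v} (rX : X → X → Prop) (rY : Y → Y → Prop)
    (x : X) (y : Y) : Prop :=
  ∃ f : X ≃ Y, (∀ a b, rX a b ↔ rY (f a) (f b)) ∧ f x = y

/-- A simulation of graphs. -/
def IsSimulation {X : Type u} {Y : Type v} (rX : X → X → Prop)
    (rY : Y → Y → Prop) (f : X → Y) : Prop :=
  (∀ a b, rX a b → rY (f a) (f b)) ∧
  (∀ x y, rY y (f x) → ∃ a, rX a x ∧ f a = y)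

/-- A bisimulation between graphs. -/
def IsBisimulation {X : Type u} {Y : Type v} (rX : X → X → Prop)
    (rY : Y → Y → Prop) (R : X → Y → Prop) : Prop :=
  ∀ x y, R x y →
    (∀ x', rX x' x → ∃ y', rY y' y ∧ R x' y') ∧
    (∀ y', rY y' y → ∃ x', rX x' x ∧ R x' y')

/-- A bi-entire relation. -/
def BiEntire {X : Type u} {Y : Type v} (R : X → Y → Prop) : Prop :=
  (∀ x, ∃ y, R x y) ∧ (∀ y, ∃ x, R x y)

/-!
By well-founded induction, every isomorphism `f` between `X/x` and `X/y` fixes each node: the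
children of `f a` are the images of the children of `a`, which are fixed by induction, so `f a`
and `a` have the same children and are equal by extensionality. Applied to the root, `y = x`.
-/

theorem IsWFRel.wellFounded {X : Type u} {r : X → X → Prop} (h : IsWFRel r) : WellFounded r := by
  refine ⟨fun a => ?_⟩
  have hacc : {x | Acc r x} = Set.univ := h _ fun x hx => Acc.intro x hx
  exact Set.eq_univ_iff_forall.1 hacc a

theorem IsExtRel.iso_apply_val_eq {X : Type u} {r : X → X → Prop} (hext : IsExtRel r)
    (hwf : WellFounded r) {p q : X → Prop} (hp : ∀ a b, r a b → p b → p a)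
    (hq : ∀ a b, r a b → q b → q a) (f : Subtype p ≃ Subtype q)
    (hf : ∀ a b, r a.1 b.1 ↔ r (f a).1 (f b).1) (a : Subtype p) : (f a).1 = a.1 := by
  suffices key : ∀ z (hz : p z), (f ⟨z, hz⟩).1 = z from key a.1 a.2
  intro z
  induction z using hwf.induction with
  | _ z ih =>
    intro hz
    apply hext
    intro w
    constructor
    · intro hw
      set b := f.symm ⟨w, hq w _ hw (f ⟨z, hz⟩).2⟩
      have hfb : (f b).1 = w := congrArg Subtype.val (f.apply_symm_apply _)
      have hbz : r b.1 z := (hf b ⟨z, hz⟩).2 (hfb ▸ hw)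
      have hwb : w = b.1 := hfb.symm.trans (ih b.1 hbz b.2)
      exact hwb ▸ hbz
    · intro hw
      have hpw := hp w z hw hz
      exact ih w hw hpw ▸ (hf ⟨w, hpw⟩ ⟨z, hz⟩).1 hw

/-- If `(X, r)` is a well-founded extensional graph and the pointed subgraphs `X/x` and `X/y`
are isomorphic as pointed graphs, then `x = y`. -/
theorem subgraph_pointed_iso_eq {X : Type u} (r : X → X → Prop)
    (hwf : IsWFRel r) (hext : IsExtRel r) (x y : X)
    (h : PIso (belowRel r x) (belowRel r y) (belowRoot r x) (belowRoot r y)) :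
    x = y := by
  obtain ⟨f, hf, hroot⟩ := h
  have hfix := hext.iso_apply_val_eq hwf.wellFounded (fun _ _ => Relation.ReflTransGen.head)
    (fun _ _ => Relation.ReflTransGen.head) f hf (belowRoot r x)
  exact hfix.symm.trans (congrArg Subtype.val hroot)
end

section
/- Any bi-entire bisimulation R between well-founded extensional graphs (X, ≺) and (Y, ≺) is the graph of an isomorphism: there is a bijection f : X → Y such that R(x,y) holds if and only if f x = y, and x' ≺ x if and only if f x' ≺ f x. -/
universe u v

section Bisimulation

variable {X : Type u} {Y : Type v} {rX : X → X → Prop} {rY : Y → Y → Prop} {R : X → Y → Prop}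

theorem IsBisimulation.flip (hbis : IsBisimulation rX rY R) : IsBisimulation rY rX (flip R) :=
  fun y x hxy => ⟨(hbis x y hxy).2, (hbis x y hxy).1⟩

/-- Two `R`-images `y, y'` of `x` have the same children: each child of `y` is related to a
child `x'` of `x`, which is related to a child of `y'`, equal to it by induction on `x'`. -/
theorem IsBisimulation.rightUnique (hbis : IsBisimulation rX rY R) (hwf : IsWFRel rX)
    (hext : IsExtRel rY) : Relator.RightUnique R := by
  intro x
  induction x using WellFounded.induction hwf.wellFounded with
  | _ x ih =>
    have children_sub : ∀ {y y'}, R x y → R x y' → ∀ z, rY z y → rY z y' := by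
      intro y y' hy hy' z hz
      obtain ⟨x', hx', hx'z⟩ := (hbis x y hy).2 z hz
      obtain ⟨z', hz', hx'z'⟩ := (hbis x y' hy').1 x' hx'
      rwa [ih x' hx' hx'z hx'z']
    intro y y' hy hy'
    exact hext y y' fun z => ⟨children_sub hy hy' z, children_sub hy' hy z⟩

theorem IsBisimulation.leftUnique (hbis : IsBisimulation rX rY R) (hwf : IsWFRel rY)
    (hext : IsExtRel rX) : Relator.LeftUnique R :=
  fun _ _ _ hx hx' => hbis.flip.rightUnique hwf hext hx hx'

theorem BiEntire.exists_equiv (hent : BiEntire R) (hl : Relator.LeftUnique R)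
    (hr : Relator.RightUnique R) : ∃ f : X ≃ Y, ∀ x y, R x y ↔ f x = y := by
  choose f hf using hent.1
  choose g hg using hent.2
  exact ⟨⟨f, g, fun x => hl (hg (f x)) (hf x), fun y => hr (hf (g y)) (hg y)⟩,
    fun x y => ⟨hr (hf x), by rintro rfl; exact hf x⟩⟩

theorem IsBisimulation.rel_iff_of_graph (hbis : IsBisimulation rX rY R) {f : X ≃ Y}
    (hf : ∀ x y, R x y ↔ f x = y) (a b : X) : rX a b ↔ rY (f a) (f b) := by
  have hfb := (hf b (f b)).2 rfl
  constructor
  · intro hab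
    obtain ⟨y, hy, hay⟩ := (hbis b (f b) hfb).1 a hab
    rwa [(hf a y).1 hay]
  · intro hab
    obtain ⟨x, hx, hxa⟩ := (hbis b (f b) hfb).2 (f a) hab
    rwa [← f.injective ((hf x (f a)).1 hxa)]

end Bisimulation

/-- A bi-entire bisimulation between well-founded extensional graphs is the graph of an
isomorphism. -/
theorem bientire_bisimulation_iso {X : Type u} {Y : Type u}
    (rX : X → X → Prop) (rY : Y → Y → Prop) (R : X → Y → Prop)
    (hwfX : IsWFRel rX) (hextX : IsExtRel rX)
    (hwfY : IsWFRel rY) (hextY : IsExtRel rY)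
    (hbis : IsBisimulation rX rY R) (hent : BiEntire R) :
    ∃ f : X ≃ Y, (∀ x y, R x y ↔ f x = y) ∧ (∀ a b, rX a b ↔ rY (f a) (f b)) := by
  obtain ⟨f, hf⟩ :=
    hent.exists_equiv (hbis.leftUnique hwfY hextX) (hbis.rightUnique hwfX hextY)
  exact ⟨f, hf, hbis.rel_iff_of_graph hf⟩
end

section
/- A well-founded graph (X, ≺) is extensional if and only if every bisimulation R from X to itself is contained in the identity, i.e., R(x,y) implies x = y. -/
universe u v

theorem IsWFRel.induction {X : Type u} {r : X → X → Prop} (hwf : IsWFRel r) {P : X → Prop}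
    (step : ∀ x, (∀ y, r y x → P y) → P x) (x : X) : P x :=
  Set.eq_univ_iff_forall.mp (hwf {x | P x} step) x

/-- `R` matches the children of `x` with those of `y`, and matched children are equal by
induction on `x`, so `x` and `y` have the same children. -/
theorem IsExtRel.eq_of_isBisimulation {X : Type u} {r : X → X → Prop} (hext : IsExtRel r)
    (hwf : IsWFRel r) {R : X → X → Prop} (hR : IsBisimulation r r R) {x y : X} (hxy : R x y) :
    x = y := by
  induction x using hwf.induction generalizing y with
  | step x ih =>
    obtain ⟨forth, back⟩ := hR x y hxy
    refine hext x y fun z => ⟨fun hzx => ?_, fun hzy => ?_⟩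
    · obtain ⟨y', hy'y, hzy'⟩ := forth z hzx
      rwa [ih z hzx hzy']
    · obtain ⟨x', hx'x, hx'z⟩ := back z hzy
      rwa [← ih x' hx'x hx'z]

theorem isBisimulation_sameChildren {X : Type u} (r : X → X → Prop) :
    IsBisimulation r r fun a b => ∀ z, r z a ↔ r z b :=
  fun _ _ hab =>
    ⟨fun x' hx' => ⟨x', (hab x').mp hx', fun _ => Iff.rfl⟩,
      fun y' hy' => ⟨y', (hab y').mpr hy', fun _ => Iff.rfl⟩⟩

/-- A well-founded graph is extensional iff every bisimulation from it to itself is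
contained in the identity. -/
theorem wf_ext_iff_bisimulations_sub_id {X : Type u} (r : X → X → Prop)
    (hwf : IsWFRel r) :
    IsExtRel r ↔
      ∀ R : X → X → Prop, IsBisimulation r r R → ∀ x y, R x y → x = y :=
  ⟨fun hext _ hR _ _ hxy => hext.eq_of_isBisimulation hwf hR hxy,
    fun h => h _ (isBisimulation_sameChildren r)⟩
end

section
/- Let (X, ≺) be a graph and R an equivalence relation on X which is also a bisimulation from X to X. Let q : X → X/R be the quotient map, and define a relation ≺' on X/R by a ≺' b iff there exist x ≺ y in X with q x = a and q y = b. Then q is a simulation from (X, ≺) to (X/R, ≺'). Moreover, if (X, ≺, ⋆) is an accessible pointed graph, then (X/R, ≺', q ⋆) is an accessible pointed graph. -/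
universe u v

/- The quotient map by a bisimulation `R` is a simulation because the equivalence relation
generated by `R` is again a bisimulation: a child of `q y` is the class of a child of some `x`
with `q x = q y`, and the bisimulation transports it to a child of `y` in the same class.
Accessibility passes to the quotient since `q` is a surjective graph homomorphism. -/

open Relation

section Graph

variable {X : Type u} {Y : Type v} {r : X → X → Prop}

theorem IsBisimulation.eqvGen {R : X → X → Prop} (h : IsBisimulation r r R) :
    IsBisimulation r r (EqvGen R) := by
  intro x y hxy
  induction hxy with
  | rel x y hxy =>
    obtain ⟨forth, back⟩ := h x y hxy
    exact ⟨fun x' hx' => (forth x' hx').imp fun _ => And.imp_right (.rel _ _),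
      fun y' hy' => (back y' hy').imp fun _ => And.imp_right (.rel _ _)⟩
  | refl x => exact ⟨fun x' hx' => ⟨x', hx', .refl _⟩, fun y' hy' => ⟨y', hy', .refl _⟩⟩
  | symm x y _ ih =>
    exact ⟨fun x' hx' => (ih.2 x' hx').imp fun _ => And.imp_right (.symm _ _),
      fun y' hy' => (ih.1 y' hy').imp fun _ => And.imp_right (.symm _ _)⟩
  | trans x y z _ _ ihxy ihyz =>
    refine ⟨fun x' hx' => ?_, fun z' hz' => ?_⟩
    · obtain ⟨y', hy', hxy'⟩ := ihxy.1 x' hx'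
      obtain ⟨z', hz', hyz'⟩ := ihyz.1 y' hy'
      exact ⟨z', hz', .trans _ _ _ hxy' hyz'⟩
    · obtain ⟨y', hy', hyz'⟩ := ihyz.2 z' hz'
      obtain ⟨x', hx', hxy'⟩ := ihxy.2 y' hy'
      exact ⟨x', hx', .trans _ _ _ hxy' hyz'⟩

theorem isSimulation_quotMk {R : X → X → Prop} (h : IsBisimulation r r R) :
    IsSimulation r (Relation.Map r (Quot.mk R) (Quot.mk R)) (Quot.mk R) := by
  refine ⟨fun a b hab => ⟨a, b, hab, rfl, rfl⟩, ?_⟩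
  rintro x _ ⟨u, v, huv, rfl, hvx⟩
  obtain ⟨u', hu', huu'⟩ := (h.eqvGen v x (Quot.eq.mp hvx)).1 u huv
  exact ⟨u', hu', Quot.eq.mpr (.symm _ _ huu')⟩

theorem reflTransGen_root_of_surjective {s : Y → Y → Prop} {f : X → Y}
    (hf : Function.Surjective f) (hmap : ∀ a b, r a b → s (f a) (f b)) {star : X}
    (hacc : ∀ x, ReflTransGen r x star) (y : Y) : ReflTransGen s y (f star) := by
  obtain ⟨x, rfl⟩ := hf y
  exact ReflTransGen.lift f hmap _ _ (hacc x)

end Graph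

theorem bisimulation_quotient_general {X : Type u} (r R : X → X → Prop)
    (hbis : IsBisimulation r r R) :
    IsSimulation r
      (fun a b => ∃ x y, r x y ∧ Quot.mk R x = a ∧ Quot.mk R y = b)
      (Quot.mk R) ∧
    ∀ star : X, (∀ x, Relation.ReflTransGen r x star) →
      ∀ a : Quot R,
        Relation.ReflTransGen
          (fun a b => ∃ x y, r x y ∧ Quot.mk R x = a ∧ Quot.mk R y = b)
          a (Quot.mk R star) :=
  ⟨isSimulation_quotMk hbis, fun _ hacc =>
    reflTransGen_root_of_surjective Quot.mk_surjective (isSimulation_quotMk hbis).1 hacc⟩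

/-- Quotient of a graph by an equivalence-relation bisimulation: the quotient map is a
simulation onto the induced relation, and accessible pointed graphs quotient to
accessible pointed graphs. -/
theorem bisimulation_quotient {X : Type u} (r R : X → X → Prop)
    (hR : Equivalence R) (hbis : IsBisimulation r r R) :
    IsSimulation r
      (fun a b => ∃ x y, r x y ∧ Quot.mk R x = a ∧ Quot.mk R y = b)
      (Quot.mk R) ∧
    ∀ star : X, (∀ x, Relation.ReflTransGen r x star) →
      ∀ a : Quot R,
        Relation.ReflTransGen
          (fun a b => ∃ x y, r x y ∧ Quot.mk R x = a ∧ Quot.mk R y = b)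
          a (Quot.mk R star) :=
  bisimulation_quotient_general r R hbis
end

section
/- Let C be a category with finite limits whose terminal object 1 is a strong generator, in the sense that every monomorphism m : A ⟶ X such that every global element 1 ⟶ X factors through m is an isomorphism. Then a morphism f : Y ⟶ X in C is a monomorphism if and only if every global element of X factors through f in at most one way, i.e., for all u, v : 1 ⟶ Y, u ≫ f = v ≫ f implies u = v. -/
/-! `f` is mono iff its diagonal `Y ⟶ Y ×_X Y` is an isomorphism. The diagonal is always mono,
and injectivity of `f` on global elements says exactly that every global element of the kernel
pair `Y ×_X Y` factors through the diagonal, so the strong generator makes it an isomorphism. -/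

open CategoryTheory CategoryTheory.Limits

universe v u

namespace CategoryTheory.Limits.pullback

variable {C : Type u} [Category.{v} C] {T Y X : C} {f : Y ⟶ X} [HasPullback f f]

theorem exists_comp_diagonal_eq (hf : ∀ u v : T ⟶ Y, u ≫ f = v ≫ f → u = v)
    (x : T ⟶ pullback f f) : ∃ x' : T ⟶ Y, x' ≫ diagonal f = x := by
  have hfst_snd : x ≫ fst f f = x ≫ snd f f := hf _ _ (by simp [condition])
  refine ⟨x ≫ fst f f, hom_ext ?_ ?_⟩
  · simp
  · simp [hfst_snd]

end CategoryTheory.Limits.pullback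

/-- In a finitely complete category whose terminal object is a strong generator
(every monomorphism through which all global elements factor is an isomorphism),
a morphism is a monomorphism iff every global element of its codomain factors
through it in at most one way. -/
theorem mono_iff_injective_on_global_elements
    {C : Type u} [Category.{v} C] [HasFiniteLimits C]
    (hgen : ∀ (A X : C) (m : A ⟶ X), Mono m →
      (∀ x : (⊤_ C) ⟶ X, ∃ x' : (⊤_ C) ⟶ A, x' ≫ m = x) → IsIso m)
    {Y X : C} (f : Y ⟶ X) :
    Mono f ↔ ∀ u v : (⊤_ C) ⟶ Y, u ≫ f = v ≫ f → u = v := by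
  refine ⟨fun _ u v => (cancel_mono f).mp, fun hf => ?_⟩
  rw [← pullback.isIso_diagonal_iff f]
  exact hgen _ _ _ inferInstance (pullback.exists_comp_diagonal_eq hf)
end

section
/- Let C be a category with finite limits whose terminal object 1 is a strong generator, in the sense that every monomorphism m : A ⟶ X such that every global element 1 ⟶ X factors through m is an isomorphism. Then for any object X and any two subobjects A, B of X: A ≤ B in the subobject order if and only if every global element 1 ⟶ X that factors through A also factors through B. -/
/-!
Pull `B` back along the arrow of `A`. A global element of `A` factors through this pullback
exactly when its image in `X` factors through `B`, so under the hypothesis every global element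
of `A` does. The generator condition then makes the pullback all of `A`, which says `A ≤ B`.
-/

open CategoryTheory CategoryTheory.Limits

universe v u

namespace CategoryTheory.Subobject

variable {C : Type u} [Category.{v} C]

theorem le_of_pullback_arrow_eq_top [HasPullbacks C] {X : C} {A B : Subobject X}
    (h : (pullback A.arrow).obj B = ⊤) : A ≤ B := by
  refine le_of_factors ?_
  have hid : ((pullback A.arrow).obj B).Factors (𝟙 (A : C)) := h ▸ top_factors _
  simpa only [Category.id_comp] using (pullback_factors_iff A.arrow B (𝟙 _)).mp hid

theorem eq_top_of_forall_global_factors [HasTerminal C]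
    (hgen : ∀ (A X : C) (m : A ⟶ X), Mono m →
      (∀ x : (⊤_ C) ⟶ X, ∃ x' : (⊤_ C) ⟶ A, x' ≫ m = x) → IsIso m)
    {Y : C} (P : Subobject Y) (hP : ∀ x : (⊤_ C) ⟶ Y, P.Factors x) : P = ⊤ :=
  (isIso_arrow_iff_eq_top P).mp <|
    hgen _ _ P.arrow inferInstance fun x => ⟨P.factorThru x (hP x), P.factorThru_arrow x (hP x)⟩

end CategoryTheory.Subobject

/-- In a finitely complete category whose terminal object is a strong generator
(every monomorphism through which all global elements factor is an isomorphism),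
subobject containment is detected by global elements: `A ≤ B` iff every global
element factoring through `A` also factors through `B`. -/
theorem subobject_le_iff_global_elements
    {C : Type u} [Category.{v} C] [HasFiniteLimits C]
    (hgen : ∀ (A X : C) (m : A ⟶ X), Mono m →
      (∀ x : (⊤_ C) ⟶ X, ∃ x' : (⊤_ C) ⟶ A, x' ≫ m = x) → IsIso m)
    {X : C} (A B : Subobject X) :
    A ≤ B ↔ ∀ x : (⊤_ C) ⟶ X, A.Factors x → B.Factors x := by
  refine ⟨fun hAB x => Subobject.factors_of_le x hAB,
    fun h => Subobject.le_of_pullback_arrow_eq_top ?_⟩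
  refine Subobject.eq_top_of_forall_global_factors hgen _ fun x => ?_
  exact (pullback_factors_iff A.arrow B x).mpr (h _ (Subobject.factors_comp_arrow x))
end

section
/- Let C be a category with finite limits and a strict initial object 0 (every morphism into 0 is an isomorphism), whose terminal object 1 is a strong generator, in the sense that every monomorphism m : A ⟶ X such that every global element 1 ⟶ X factors through m is an isomorphism, and in which 1 is nonempty, i.e., there is no morphism 1 ⟶ 0. Then an object X of C is initial if and only if there exists no morphism 1 ⟶ X. -/
open CategoryTheory CategoryTheory.Limits

universe v u

/-- In a finitely complete category with a strict initial object, whose terminal object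
is a nonempty strong generator, an object is initial iff it has no global elements. -/
theorem initial_iff_no_global_elements
    {C : Type u} [Category.{v} C] [HasFiniteLimits C] [HasInitial C]
    [HasStrictInitialObjects C]
    (hgen : ∀ (A X : C) (m : A ⟶ X), Mono m →
      (∀ x : (⊤_ C) ⟶ X, ∃ x' : (⊤_ C) ⟶ A, x' ≫ m = x) → IsIso m)
    (hne : IsEmpty ((⊤_ C) ⟶ (⊥_ C)))
    (X : C) :
    Nonempty (IsInitial X) ↔ IsEmpty ((⊤_ C) ⟶ X) := by
  refine ⟨fun ⟨hX⟩ => ⟨fun x => hne.false (x ≫ hX.to _)⟩, fun hX => ?_⟩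
  have : IsIso (initial.to X) :=
    hgen _ _ _ (initial.mono_from X _) fun x => (hX.false x).elim
  exact ⟨initialIsInitial.ofIso (asIso (initial.to X))⟩
end
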